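/- arXiv:2402.12181 — 2 statements merged into one kernel-verified Lean document; each statement's English description precedes it below -/
import Mathlib

section
/- Let A be a finite nonempty type, let q, p, g : A → ℝ be probability mass functions that are everywhere positive on A, and set c = max_{a∈A} |log p(a) − log g(a)|. Then |D_KL(q‖g) − D_KL(p‖g)| ≤ D_KL(q‖p) + c·√(2·D_KL(q‖p)). -/
/-!
Expanding the logarithms gives the exact identity
`D(q‖g) - D(p‖g) = D(q‖p) + ∑ₐ (q a - p a) (log p a - log g a)`.
The correction term is at most `c · ‖q - p‖₁`, and Pinsker's inequality
`‖q - p‖₁ ≤ √(2 D(q‖p))` finishes. Pinsker follows by Cauchy–Schwarz from the pointwise bound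
`3 (x - y)² ≤ 2 (x + 2y) · y · klFun (x / y)`, whose one-variable form
`3 (t - 1)² ≤ 2 (t + 2) klFun t` holds because the difference is convex with a critical point at `1`.
-/

noncomputable def KLdiv {A : Type*} [Fintype A] (q p : A → ℝ) : ℝ :=
  ∑ a, q a * Real.log (q a / p a)

open Real Set InformationTheory

noncomputable def pinskerGap (t : ℝ) : ℝ := 2 * (t + 2) * klFun t - 3 * (t - 1) ^ 2

lemma hasDerivAt_pinskerGap {t : ℝ} (ht : t ≠ 0) :
    HasDerivAt pinskerGap (4 * ((t + 1) * log t - 2 * (t - 1))) t := by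
  have h : HasDerivAt pinskerGap _ t :=
    ((((hasDerivAt_id t).add_const 2).const_mul 2).mul (hasDerivAt_klFun ht)).sub
      ((((hasDerivAt_id t).sub_const 1).pow 2).const_mul 3)
  refine h.congr_deriv ?_
  simp only [klFun_apply, id_eq]
  ring

lemma hasDerivAt_deriv_pinskerGap {t : ℝ} (ht : t ≠ 0) :
    HasDerivAt (fun s => 4 * ((s + 1) * log s - 2 * (s - 1))) (4 * (log t + 1 / t - 1)) t := by
  have h : HasDerivAt (fun s => 4 * ((s + 1) * log s - 2 * (s - 1))) _ t :=
    ((((hasDerivAt_id t).add_const 1).mul (hasDerivAt_log ht)).sub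
      (((hasDerivAt_id t).sub_const 1).const_mul 2)).const_mul 4
  refine h.congr_deriv ?_
  simp only [id_eq]
  field_simp
  ring

lemma convexOn_pinskerGap : ConvexOn ℝ (Ici 0) pinskerGap := by
  refine convexOn_of_hasDerivWithinAt2_nonneg (convex_Ici 0)
    (f' := fun t => 4 * ((t + 1) * log t - 2 * (t - 1))) (f'' := fun t => 4 * (log t + 1 / t - 1))
    (by unfold pinskerGap; fun_prop) ?_ ?_ ?_ <;> rw [interior_Ici]
  · exact fun t ht => (hasDerivAt_pinskerGap (ne_of_gt ht)).hasDerivWithinAt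
  · exact fun t ht => (hasDerivAt_deriv_pinskerGap (ne_of_gt ht)).hasDerivWithinAt
  · intro t ht
    have := one_sub_inv_le_log_of_pos ht
    rw [one_div]
    linarith

lemma sq_sub_one_le_mul_klFun {t : ℝ} (ht : 0 ≤ t) : 3 * (t - 1) ^ 2 ≤ 2 * (t + 2) * klFun t := by
  have hmin : IsMinOn pinskerGap (Ici 0) 1 := by
    refine convexOn_pinskerGap.isMinOn_of_rightDeriv_eq_zero (by simp) ?_
    rw [(hasDerivAt_pinskerGap one_ne_zero).hasDerivWithinAt.derivWithin
      (uniqueDiffWithinAt_Ioi 1)]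
    simp
  simpa [pinskerGap, klFun_one] using hmin (mem_Ici.2 ht)

lemma sq_sub_le_mul_mul_klFun {x y : ℝ} (hx : 0 ≤ x) (hy : 0 < y) :
    3 * (x - y) ^ 2 ≤ 2 * (x + 2 * y) * (y * klFun (x / y)) := by
  have key := sq_sub_one_le_mul_klFun (div_nonneg hx hy.le)
  calc 3 * (x - y) ^ 2 = y ^ 2 * (3 * (x / y - 1) ^ 2) := by field_simp
    _ ≤ y ^ 2 * (2 * (x / y + 2) * klFun (x / y)) := by gcongr
    _ = 2 * (x + 2 * y) * (y * klFun (x / y)) := by field_simp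

section KLdiv

variable {A : Type*} [Fintype A] {q p : A → ℝ}

lemma KLdiv_eq_sum_mul_klFun (hp : ∀ a, p a ≠ 0) (hsum : ∑ a, q a = ∑ a, p a) :
    KLdiv q p = ∑ a, p a * klFun (q a / p a) := by
  have hterm : ∀ a, p a * klFun (q a / p a) = q a * log (q a / p a) + (p a - q a) := by
    intro a
    rw [klFun_apply]
    field_simp [hp a]
    ring
  rw [Finset.sum_congr rfl fun a _ => hterm a, Finset.sum_add_distrib, Finset.sum_sub_distrib,
    hsum, sub_self, add_zero, KLdiv]

lemma KLdiv_nonneg (hq : ∀ a, 0 ≤ q a) (hp : ∀ a, 0 < p a) (hsum : ∑ a, q a = ∑ a, p a) :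
    0 ≤ KLdiv q p := by
  rw [KLdiv_eq_sum_mul_klFun (fun a => (hp a).ne') hsum]
  exact Finset.sum_nonneg fun a _ =>
    mul_nonneg (hp a).le (klFun_nonneg (div_nonneg (hq a) (hp a).le))

lemma sum_abs_sub_le_sqrt_two_mul_KLdiv (hq : ∀ a, 0 ≤ q a) (hp : ∀ a, 0 < p a)
    (hqsum : ∑ a, q a = 1) (hpsum : ∑ a, p a = 1) :
    ∑ a, |q a - p a| ≤ √(2 * KLdiv q p) := by
  refine le_sqrt_of_sq_le ?_
  have hcs := Finset.sum_sq_le_sum_mul_sum_of_sq_le_mul Finset.univ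
    (r := fun a => |q a - p a|) (f := fun a => (q a + 2 * p a) / 3)
    (g := fun a => 2 * (p a * klFun (q a / p a)))
    (fun a _ => by linarith [hq a, hp a])
    (fun a _ => mul_nonneg zero_le_two
      (mul_nonneg (hp a).le (klFun_nonneg (div_nonneg (hq a) (hp a).le))))
    (fun a _ => by
      have := sq_sub_le_mul_mul_klFun (hq a) (hp a)
      rw [sq_abs]
      linarith)
  have hweights : ∑ a, (q a + 2 * p a) / 3 = 1 := by
    rw [← Finset.sum_div, Finset.sum_add_distrib, ← Finset.mul_sum, hqsum, hpsum]
    norm_num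
  have hklFun : ∑ a, 2 * (p a * klFun (q a / p a)) = 2 * KLdiv q p := by
    rw [← Finset.mul_sum, KLdiv_eq_sum_mul_klFun (fun a => (hp a).ne') (hqsum.trans hpsum.symm)]
  simpa only [hweights, hklFun, one_mul] using hcs

lemma KLdiv_sub_KLdiv {g : A → ℝ} (hq : ∀ a, q a ≠ 0) (hp : ∀ a, p a ≠ 0) (hg : ∀ a, g a ≠ 0) :
    KLdiv q g - KLdiv p g = KLdiv q p + ∑ a, (q a - p a) * (log (p a) - log (g a)) := by
  simp only [KLdiv, ← Finset.sum_sub_distrib, ← Finset.sum_add_distrib]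
  refine Finset.sum_congr rfl fun a _ => ?_
  rw [log_div (hq a) (hg a), log_div (hp a) (hg a), log_div (hq a) (hp a)]
  ring

end KLdiv

lemma abs_sum_mul_le_mul_sum_abs {ι : Type*} (s : Finset ι) {u w : ι → ℝ} {c : ℝ}
    (hw : ∀ i ∈ s, |w i| ≤ c) : |∑ i ∈ s, u i * w i| ≤ c * ∑ i ∈ s, |u i| := by
  calc |∑ i ∈ s, u i * w i| ≤ ∑ i ∈ s, |u i| * |w i| := by
        simpa only [abs_mul] using Finset.abs_sum_le_sum_abs (fun i => u i * w i) s
    _ ≤ ∑ i ∈ s, |u i| * c := Finset.sum_le_sum fun i hi =>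
        mul_le_mul_of_nonneg_left (hw i hi) (abs_nonneg _)
    _ = c * ∑ i ∈ s, |u i| := by rw [← Finset.sum_mul, mul_comm]

theorem stmt_5_general {A : Type*} [Fintype A] [Nonempty A]
    (q p g : A → ℝ)
    (hq : ∀ a, 0 < q a) (hp : ∀ a, 0 < p a) (hg : ∀ a, 0 < g a)
    (hqsum : ∑ a, q a = 1) (hpsum : ∑ a, p a = 1)
    (c : ℝ)
    (hc : c = Finset.univ.sup' Finset.univ_nonempty
                fun a => |Real.log (p a) - Real.log (g a)|) :
    |KLdiv q g - KLdiv p g| ≤ KLdiv q p + c * Real.sqrt (2 * KLdiv q p) := by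
  have hcle : ∀ a ∈ Finset.univ, |log (p a) - log (g a)| ≤ c := fun a ha =>
    hc ▸ Finset.le_sup' (fun a => |log (p a) - log (g a)|) ha
  have hc0 : 0 ≤ c := (abs_nonneg _).trans (hcle (Classical.arbitrary A) (Finset.mem_univ _))
  have hKL := KLdiv_nonneg (fun a => (hq a).le) hp (hqsum.trans hpsum.symm)
  rw [KLdiv_sub_KLdiv (fun a => (hq a).ne') (fun a => (hp a).ne') (fun a => (hg a).ne')]
  calc _ ≤ |KLdiv q p| + |∑ a, (q a - p a) * (log (p a) - log (g a))| := abs_add_le _ _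
    _ ≤ KLdiv q p + c * √(2 * KLdiv q p) := by
      rw [abs_of_nonneg hKL]
      gcongr
      exact (abs_sum_mul_le_mul_sum_abs _ hcle).trans <| mul_le_mul_of_nonneg_left
        (sum_abs_sub_le_sqrt_two_mul_KLdiv (fun a => (hq a).le) hp hqsum hpsum) hc0

/-- For everywhere-positive PMFs `q, p, g` on a finite nonempty type,
with `c = max_a |log (p a) − log (g a)|`,
`|D_KL(q‖g) − D_KL(p‖g)| ≤ D_KL(q‖p) + c·√(2·D_KL(q‖p))`. -/
theorem stmt_5 {A : Type*} [Fintype A] [Nonempty A]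
    (q p g : A → ℝ)
    (hq : ∀ a, 0 < q a) (hp : ∀ a, 0 < p a) (hg : ∀ a, 0 < g a)
    (hqsum : ∑ a, q a = 1) (hpsum : ∑ a, p a = 1) (hgsum : ∑ a, g a = 1)
    (c : ℝ)
    (hc : c = Finset.univ.sup' Finset.univ_nonempty
                fun a => |Real.log (p a) - Real.log (g a)|) :
    |KLdiv q g - KLdiv p g| ≤ KLdiv q p + c * Real.sqrt (2 * KLdiv q p) :=
  stmt_5_general q p g hq hp hg hqsum hpsum c hc
end

section
/- Let I be a finite nonempty type, let P : I → ℝ satisfy P(i) ≥ 0 for all i and Σ_i P(i) = 1, let λ_i, σ_i ∈ ℝ with σ_i ≥ 0 for each i ∈ I, and let λ ∈ ℝ. Then Σ_i P(i)·σ_i² + Σ_i P(i)·(λ_i − λ)² ≥ Σ_i P(i)²·σ_i² + (Σ_i P(i)·λ_i − λ)². -/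
/-!
Both terms on the left dominate their counterparts on the right. Weights in `[0, 1]` satisfy
`P i ^ 2 ≤ P i`, which handles the variances; for the means, `∑ P i * λᵢ - λ` is the
`P`-average of `λᵢ - λ`, so Jensen's inequality for the convex function `x ↦ x ^ 2` applies.
-/

open Finset

section WeightedSums

variable {ι : Type*} (s : Finset ι) {w : ι → ℝ}

lemma le_one_of_sum_eq_one (hw : ∀ i ∈ s, 0 ≤ w i) (hw₁ : ∑ i ∈ s, w i = 1) {i : ι}
    (hi : i ∈ s) : w i ≤ 1 :=
  hw₁ ▸ single_le_sum hw hi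

lemma sum_sq_mul_le_sum_mul (hw : ∀ i ∈ s, 0 ≤ w i) (hw₁ : ∀ i ∈ s, w i ≤ 1) {a : ι → ℝ}
    (ha : ∀ i ∈ s, 0 ≤ a i) : ∑ i ∈ s, w i ^ 2 * a i ≤ ∑ i ∈ s, w i * a i :=
  sum_le_sum fun i hi => mul_le_mul_of_nonneg_right (sq_le (hw i hi) (hw₁ i hi)) (ha i hi)

lemma sq_sum_mul_le_sum_mul_sq (hw : ∀ i ∈ s, 0 ≤ w i) (hw₁ : ∑ i ∈ s, w i = 1) (x : ι → ℝ) :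
    (∑ i ∈ s, w i * x i) ^ 2 ≤ ∑ i ∈ s, w i * x i ^ 2 := by
  simpa using even_two.convexOn_pow.map_sum_le hw hw₁ fun i _ => Set.mem_univ (x i)

lemma sum_mul_sub_eq_sum_mul_sub (hw₁ : ∑ i ∈ s, w i = 1) (x : ι → ℝ) (c : ℝ) :
    ∑ i ∈ s, w i * x i - c = ∑ i ∈ s, w i * (x i - c) := by
  simp only [mul_sub, sum_sub_distrib, ← sum_mul, hw₁, one_mul]

end WeightedSums

theorem stmt_11_general {I : Type*} [Fintype I]
    (P : I → ℝ) (hP : ∀ i, 0 ≤ P i) (hPsum : ∑ i, P i = 1)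
    (lam : I → ℝ) (sig : I → ℝ) (l : ℝ) :
    ∑ i, P i * sig i ^ 2 + ∑ i, P i * (lam i - l) ^ 2
      ≥ ∑ i, P i ^ 2 * sig i ^ 2 + (∑ i, P i * lam i - l) ^ 2 := by
  have hP' : ∀ i ∈ univ, 0 ≤ P i := fun i _ => hP i
  have hvar : ∑ i, P i ^ 2 * sig i ^ 2 ≤ ∑ i, P i * sig i ^ 2 :=
    sum_sq_mul_le_sum_mul _ hP' (fun i hi => le_one_of_sum_eq_one _ hP' hPsum hi)
      fun i _ => sq_nonneg (sig i)
  have hmean : (∑ i, P i * lam i - l) ^ 2 ≤ ∑ i, P i * (lam i - l) ^ 2 := by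
    rw [sum_mul_sub_eq_sum_mul_sub _ hPsum]
    exact sq_sum_mul_le_sum_mul_sq _ hP' hPsum _
  exact add_le_add hvar hmean

/-- Appendix C.3: for weights `P` summing to 1, means `λᵢ`,
nonnegative `σᵢ`, and any `λ`,
`∑ᵢ P i·σᵢ² + ∑ᵢ P i·(λᵢ − λ)² ≥ ∑ᵢ P i²·σᵢ² + (∑ᵢ P i·λᵢ − λ)²`. -/
theorem stmt_11 {I : Type*} [Fintype I] [Nonempty I]
    (P : I → ℝ) (hP : ∀ i, 0 ≤ P i) (hPsum : ∑ i, P i = 1)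
    (lam : I → ℝ) (sig : I → ℝ) (hsig : ∀ i, 0 ≤ sig i) (l : ℝ) :
    ∑ i, P i * sig i ^ 2 + ∑ i, P i * (lam i - l) ^ 2
      ≥ ∑ i, P i ^ 2 * sig i ^ 2 + (∑ i, P i * lam i - l) ^ 2 :=
  stmt_11_general P hP hPsum lam sig l
end
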